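/- In any group, an element g is contained in a unique maximal abelian subgroup for every non-identity g if and only if the group is commutative transitive. -/

import Mathlib

/-!
By Zorn's lemma every abelian subgroup lies in a maximal one. If maximal abelian subgroups
containing `b ≠ 1` are unique, then for `a ~ b ~ c` the maximal abelian subgroups through the
abelian groups `⟨a, b⟩` and `⟨b, c⟩` coincide, so `a` and `c` commute. Conversely, in a
commutative transitive group the centralizer of `g ≠ 1` is abelian; since every abelian subgroup
containing `g` lies in it, it is the unique maximal abelian subgroup containing `g`.
-/

def IsCommTransitive (G : Type*) [Group G] : Prop :=
  ∀ a b c : G, a ≠ 1 → b ≠ 1 → c ≠ 1 → Commute a b → Commute b c → Commute a c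

namespace Subgroup

variable {G : Type*} [Group G]

theorem isMulCommutative_sSup_of_directedOn {K : Set (Subgroup G)} (Kne : K.Nonempty)
    (hK : DirectedOn (· ≤ ·) K) (hcomm : ∀ H ∈ K, IsMulCommutative H) :
    IsMulCommutative ↥(sSup K) := by
  refine .of_setLike_mul_comm fun x hx y hy ↦ ?_
  obtain ⟨A, hA, hxA⟩ := (mem_sSup_of_directedOn Kne hK).1 hx
  obtain ⟨B, hB, hyB⟩ := (mem_sSup_of_directedOn Kne hK).1 hy
  obtain ⟨C, hC, hAC, hBC⟩ := hK A hA B hB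
  have := hcomm C hC
  exact setLike_mul_comm (hAC hxA) (hBC hyB)

theorem exists_le_maximal_isMulCommutative (H : Subgroup G) [IsMulCommutative H] :
    ∃ M, H ≤ M ∧ Maximal (fun K : Subgroup G ↦ IsMulCommutative K) M :=
  zorn_le_nonempty₀ {K : Subgroup G | IsMulCommutative K} (fun c hc hchain K hK ↦
    ⟨sSup c, isMulCommutative_sSup_of_directedOn ⟨K, hK⟩ hchain.directedOn hc,
      fun _ ↦ le_sSup⟩) H ‹_›

theorem exists_maximal_isMulCommutative_mem_mem {a b : G} (hab : Commute a b) :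
    ∃ M, Maximal (fun K : Subgroup G ↦ IsMulCommutative K) M ∧ a ∈ M ∧ b ∈ M := by
  have : IsMulCommutative (closure {a, b}) := isMulCommutative_closure <| by
    rintro x (rfl | rfl) y (rfl | rfl)
    exacts [rfl, hab, hab.symm, rfl]
  obtain ⟨M, hle, hM⟩ := exists_le_maximal_isMulCommutative (closure {a, b})
  exact ⟨M, hM, hle (subset_closure (by simp)), hle (subset_closure (by simp))⟩

theorem le_centralizer_singleton_of_mem (H : Subgroup G) [IsMulCommutative H] {g : G}
    (hg : g ∈ H) : H ≤ centralizer {g} :=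
  (le_centralizer H).trans (centralizer_le (Set.singleton_subset_iff.2 hg))

theorem maximal_isMulCommutative_iff_eq_centralizer {g : G}
    [IsMulCommutative (centralizer {g})] {M : Subgroup G} (hgM : g ∈ M) :
    Maximal (fun K : Subgroup G ↦ IsMulCommutative K) M ↔ M = centralizer {g} := by
  constructor
  · intro hM
    have := hM.prop
    exact hM.eq_of_le ‹_› (le_centralizer_singleton_of_mem M hgM)
  · rintro rfl
    exact ⟨‹_›, fun N _ hle ↦ le_centralizer_singleton_of_mem N (hle hgM)⟩

end Subgroup

open Subgroup

theorem IsCommTransitive.isMulCommutative_centralizer {G : Type*} [Group G]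
    (h : IsCommTransitive G) {g : G} (hg : g ≠ 1) : IsMulCommutative (centralizer {g}) := by
  refine .of_setLike_mul_comm fun x hx y hy ↦ ?_
  rw [mem_centralizer_singleton_iff] at hx hy
  rcases eq_or_ne x 1 with rfl | hx1
  · simp
  rcases eq_or_ne y 1 with rfl | hy1
  · simp
  exact h x g y hx1 hg hy1 hx hy.symm

theorem unique_maximal_abelian_iff_ct (G : Type*) [Group G] :
    (∀ g : G, g ≠ 1 → ∃! M : Subgroup G,
        (IsMulCommutative M ∧ ∀ N : Subgroup G, IsMulCommutative N → M ≤ N → M = N)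
        ∧ g ∈ M) ↔
    (∀ a b c : G, a ≠ 1 → b ≠ 1 → c ≠ 1 →
      Commute a b → Commute b c → Commute a c) := by
  have hmaximal (M : Subgroup G) :
      (IsMulCommutative M ∧ ∀ N : Subgroup G, IsMulCommutative N → M ≤ N → M = N) ↔
        Maximal (fun K : Subgroup G ↦ IsMulCommutative K) M :=
    (maximal_iff (P := fun K : Subgroup G ↦ IsMulCommutative K)).symm
  simp only [hmaximal]
  change _ ↔ IsCommTransitive G
  constructor
  · intro h a b c _ hb _ hab hbc
    obtain ⟨M, hM, haM, hbM⟩ := exists_maximal_isMulCommutative_mem_mem hab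
    obtain ⟨N, hN, hbN, hcN⟩ := exists_maximal_isMulCommutative_mem_mem hbc
    have hMN : M = N := (h b hb).unique ⟨hM, hbM⟩ ⟨hN, hbN⟩
    have := hM.prop
    exact setLike_mul_comm haM (hMN ▸ hcN)
  · intro h g hg
    have := h.isMulCommutative_centralizer hg
    have hgg : g ∈ centralizer {g} := mem_centralizer_singleton_iff.2 rfl
    exact ⟨centralizer {g}, ⟨(maximal_isMulCommutative_iff_eq_centralizer hgg).2 rfl, hgg⟩,
      fun M ⟨hM, hgM⟩ ↦ (maximal_isMulCommutative_iff_eq_centralizer hgM).1 hM⟩
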